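/- Every n-rainbow graph on 2n vertices arises (up to isomorphism) as the double of some graph on n vertices: if G̃ is a simple graph on 2n vertices with an n-rainbow coloring, and G is the induced subgraph on a transversal of the color classes (one vertex per color), then the doubling construction applied to G produces a graph isomorphic to G̃. -/

import Mathlib

/-!
Let `s i` be the unique neighbour of `t i` of colour `i`. Then `t i ≠ s i`, so `t` and `s`
together give `2n` distinct vertices, i.e. all of them, and each colour class is a pair
`{t i, s i}`. Since every colour appears exactly once in each neighbourhood, every vertex is
adjacent to exactly one vertex of each pair. This complementarity determines all adjacencies
from those among the `t i`, and they are exactly the adjacencies of the double.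
-/

open SimpleGraph

/-- `c` is an `n`-rainbow coloring of `G`: every color appears exactly once in the
open neighborhood of each vertex. -/
def IsRainbow {V : Type*} {n : ℕ} (G : SimpleGraph V) (c : V → Fin n) : Prop :=
  ∀ v : V, ∀ i : Fin n, ∃! w : V, G.Adj v w ∧ c w = i

/-- Switching `G` at the vertex `v`: reverse the adjacency between `v` and all other
vertices. -/
def switch {V : Type*} (G : SimpleGraph V) (v : V) : SimpleGraph V :=
  SimpleGraph.fromRel (fun x y => Xor' (G.Adj x y) (x = v ∨ y = v))

/-- The double `G̃` of `G`: vertices `inl i` (= `i`) and `inr i` (= `i'`), with edges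
`(i,i')`; `(i,j)` and `(i',j')` for edges `(i,j)` of `G`; and `(i,j')`, `(i',j)` for
non-edges `i ≠ j` of `G`. -/
def double {V : Type*} (G : SimpleGraph V) : SimpleGraph (V ⊕ V) :=
  SimpleGraph.fromRel (fun x y =>
    match x, y with
    | .inl i, .inl j => G.Adj i j
    | .inr i, .inr j => G.Adj i j
    | .inl i, .inr j => i = j ∨ ¬ G.Adj i j
    | .inr i, .inl j => i = j ∨ ¬ G.Adj i j)

open Classical in
/-- The Seidel matrix of `G`: zero diagonal, `1` for edges, `-1` for non-edges. -/
noncomputable def seidel {V : Type*} (G : SimpleGraph V) : Matrix V V ℝ :=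
  fun i j => if i = j then 0 else if G.Adj i j then 1 else -1

/-- A Seidel matrix: symmetric, zero diagonal, off-diagonal entries `±1`. -/
def IsSeidel {m : Type*} (A : Matrix m m ℝ) : Prop :=
  A.IsSymm ∧ (∀ i, A i i = 0) ∧ ∀ i j, i ≠ j → A i j = 1 ∨ A i j = -1

/-- A permutation matrix. -/
def IsPermMatrix {m : Type*} [DecidableEq m] (P : Matrix m m ℝ) : Prop :=
  ∃ σ : Equiv.Perm m, P = σ.permMatrix ℝ

/-- A line (row or column) with exactly one nonzero entry, equal to `±1`. -/
def SignedPermLine {m : Type*} (r : m → ℝ) : Prop :=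
  ∃ j, (r j = 1 ∨ r j = -1) ∧ ∀ k, k ≠ j → r k = 0

/-- A line with either exactly one nonzero entry `±1`, or exactly two nonzero entries,
each `±1/2`. -/
def HalfLine {m : Type*} (r : m → ℝ) : Prop :=
  SignedPermLine r ∨
    ∃ j k, j ≠ k ∧ (r j = 1/2 ∨ r j = -1/2) ∧ (r k = 1/2 ∨ r k = -1/2) ∧
      ∀ l, l ≠ j → l ≠ k → r l = 0

/-- A signed permutation matrix: exactly one nonzero entry, `±1`, in every row and column. -/
def IsSignedPermMatrix {m : Type*} (Q : Matrix m m ℝ) : Prop :=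
  (∀ i, SignedPermLine (Q i)) ∧ (∀ j, SignedPermLine (fun i => Q i j))

/-- A signed half-permutation matrix. -/
def IsSignedHalfPermMatrix {m : Type*} (S : Matrix m m ℝ) : Prop :=
  (∀ i, HalfLine (S i)) ∧ (∀ j, HalfLine (fun i => S i j))

/-- `T` is an integration of the signed half-permutation matrix `S`. -/
def IsIntegration {m : Type*} (T S : Matrix m m ℝ) : Prop :=
  IsSignedPermMatrix T ∧
    ∀ i j, ((S i j = 1 ∨ S i j = -1) → T i j = S i j) ∧
      ((S i j = 1/2 ∨ S i j = -1/2) → T i j = 2 * S i j ∨ T i j = 0) ∧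
      (S i j = 0 → T i j = 0)

/-- Labeled switching equivalence: a sequence of switchings transforms `G` into `G'`. -/
def SwitchEquiv {V : Type*} (G G' : SimpleGraph V) : Prop :=
  Relation.ReflTransGen (fun H H' => ∃ v, H' = switch H v) G G'

/-- Switching equivalence allowing relabeling. -/
def SwitchEquivIso {V : Type*} (G G' : SimpleGraph V) : Prop :=
  ∃ H, SwitchEquiv G H ∧ Nonempty (H ≃g G')

/-- The subgraph of `G` consisting of all edges whose endpoints get the same color. -/
def sameColorSubgraph {V : Type*} {n : ℕ} (G : SimpleGraph V) (c : V → Fin n) :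
    G.Subgraph where
  verts := Set.univ
  Adj a b := G.Adj a b ∧ c a = c b
  adj_sub h := h.1
  edge_vert _ := Set.mem_univ _
  symm := ⟨fun a b h => ⟨h.1.symm, h.2.symm⟩⟩

/-- The `2n × 2n` block matrix `M̃ = [[M, I−M],[I−M, M]]`. -/
def tildeMat {n : ℕ} (M : Matrix (Fin n) (Fin n) ℝ) :
    Matrix (Fin n ⊕ Fin n) (Fin n ⊕ Fin n) ℝ :=
  Matrix.fromBlocks M (1 - M) (1 - M) M

section Double

variable {V : Type*} (G : SimpleGraph V) (i j : V)

@[simp] lemma double_adj_inl_inl : (double G).Adj (.inl i) (.inl j) ↔ G.Adj i j := by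
  simp only [double, fromRel_adj, ne_eq, Sum.inl.injEq]
  exact ⟨fun h => h.2.elim id fun h => h.symm, fun h => ⟨h.ne, .inl h⟩⟩

@[simp] lemma double_adj_inr_inr : (double G).Adj (.inr i) (.inr j) ↔ G.Adj i j := by
  simp only [double, fromRel_adj, ne_eq, Sum.inr.injEq]
  exact ⟨fun h => h.2.elim id fun h => h.symm, fun h => ⟨h.ne, .inl h⟩⟩

@[simp] lemma double_adj_inl_inr : (double G).Adj (.inl i) (.inr j) ↔ ¬ G.Adj i j := by
  simp only [double, fromRel_adj, ne_eq, reduceCtorEq, not_false_eq_true, true_and]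
  by_cases hij : i = j
  · subst hij
    simp
  · simp [hij, Ne.symm hij, G.adj_comm j i]

@[simp] lemma double_adj_inr_inl : (double G).Adj (.inr i) (.inl j) ↔ ¬ G.Adj i j := by
  rw [adj_comm, double_adj_inl_inr, G.adj_comm]

end Double

noncomputable def doubleComapIso {V W : Type*} {H : SimpleGraph W} {t s : V → W}
    (hbij : Function.Bijective (Sum.elim t s))
    (hpair : ∀ v j, H.Adj v (t j) ↔ ¬ H.Adj v (s j)) :
    double (H.comap t) ≃g H where
  toEquiv := Equiv.ofBijective _ hbij
  map_rel_iff' {a b} := by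
    have hts : ∀ i j, H.Adj (t i) (s j) ↔ ¬ H.Adj (t i) (t j) := fun i j => by
      rw [hpair, not_not]
    have hst : ∀ i j, H.Adj (s i) (t j) ↔ ¬ H.Adj (t i) (t j) := fun i j => by
      rw [H.adj_comm, hts, H.adj_comm]
    have hss : ∀ i j, H.Adj (s i) (s j) ↔ H.Adj (t i) (t j) := fun i j => by
      rw [← not_iff_not, ← hpair, hst]
    rcases a with i | i <;> rcases b with j | j <;>
      simp [hts, hst, hss]

namespace IsRainbow

variable {W : Type*} {n : ℕ} {H : SimpleGraph W} {c : W → Fin n}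

lemma adj_iff_not_adj (hc : IsRainbow H c) {a b : W} (hab : a ≠ b) (hb : c b = c a)
    (hcls : ∀ w, c w = c a → w = a ∨ w = b) (v : W) : H.Adj v a ↔ ¬ H.Adj v b := by
  obtain ⟨w, ⟨hvw, hw⟩, huniq⟩ := hc v (c a)
  constructor
  · intro hva hvb
    exact hab ((huniq a ⟨hva, rfl⟩).trans (huniq b ⟨hvb, hb⟩).symm)
  · intro hvb
    rcases hcls w hw with rfl | rfl
    · exact hvw
    · exact absurd hvw hvb

end IsRainbow

lemma sumElim_injective_of_leftInverse {V W : Type*} {t s : V → W} {c : W → V}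
    (ht : ∀ i, c (t i) = i) (hs : ∀ i, c (s i) = i) (hts : ∀ i, t i ≠ s i) :
    Function.Injective (Sum.elim t s) := by
  rintro (i | i) (j | j) h <;> have hij := congrArg c h <;>
    simp only [Sum.elim_inl, Sum.elim_inr, ht, hs] at h hij <;> subst hij
  · rfl
  · exact absurd h (hts i)
  · exact absurd h.symm (hts i)
  · rfl

lemma eq_or_eq_of_surjective_sumElim {V W : Type*} {t s : V → W} {c : W → V}
    (hsurj : Function.Surjective (Sum.elim t s)) (ht : ∀ i, c (t i) = i)
    (hs : ∀ i, c (s i) = i) (w : W) : w = t (c w) ∨ w = s (c w) := by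
  obtain ⟨i | i, rfl⟩ := hsurj w
  · simp [ht]
  · simp [hs]

/-- every `n`-rainbow graph on `2n` vertices is isomorphic to the double
of the induced subgraph on a transversal of the color classes. -/
theorem rainbow_eq_double {W : Type*} [Fintype W] {n : ℕ} (H : SimpleGraph W)
    (hcard : Fintype.card W = 2 * n) (c : W → Fin n) (hc : IsRainbow H c)
    (t : Fin n → W) (ht : ∀ i, c (t i) = i) :
    Nonempty (double (SimpleGraph.comap t H) ≃g H) := by
  choose s hs _ using fun i => hc (t i) i
  have hinj : Function.Injective (Sum.elim t s) :=
    sumElim_injective_of_leftInverse ht (fun i => (hs i).2) (fun i => (hs i).1.ne)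
  have hbij : Function.Bijective (Sum.elim t s) :=
    (Fintype.bijective_iff_injective_and_card _).2 ⟨hinj, by simp [hcard, two_mul]⟩
  have hcls : ∀ j w, c w = c (t j) → w = t j ∨ w = s j := fun j w hw => by
    simpa [hw, ht] using eq_or_eq_of_surjective_sumElim hbij.2 ht (fun i => (hs i).2) w
  exact ⟨doubleComapIso hbij fun v j =>
    hc.adj_iff_not_adj (hs j).1.ne (by rw [(hs j).2, ht]) (hcls j) v⟩
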